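/- arXiv:0905.0273 — 2 statements merged into one kernel-verified Lean document; each statement's English description precedes it below -/
import Mathlib

section
/- Let T > 0, let (Ω, F, P) be a probability space carrying a standard Brownian motion W : [0,T] × Ω → ℝ with continuous sample paths, and for each N ∈ ℕ (N ≥ 1) define the Euler approximation Y^N_0 := 0 and Y^N_{k+1} := Y^N_k − (T/N)·(Y^N_k)³ + (W_{(k+1)T/N} − W_{kT/N}) for k = 0, 1, …, N−1. Then for every p ∈ [1, ∞), lim_{N → ∞} E[|Y^N_N|^p] = ∞. -/
/-!
With step `h = T / N` and `r = 3N / T + 2` we have `h r ≥ 3`, and then `|y| ≥ r`, `|d| ≤ 1` force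
`|y - h y³ + d| ≥ |y|²`: once the Euler scheme leaves `[-r, r]`, its modulus squares at every step.
On the event that the first Brownian increment lies in `[r, r + 1]` and all later ones in
`[0, 1]`, therefore `|Y^N_N| ≥ r ^ 2 ^ (N - 1) ≥ 2 ^ 2 ^ (N - 1)`. By independence of the
increments this event has probability at least `φ(r + 1) ^ N ≥ exp (-K N⁴)`, where `φ` is the
centred Gaussian density of variance `T / N`, and the doubly exponential growth wins.
-/

open MeasureTheory ProbabilityTheory Filter

/-- `W` is a standard Brownian motion on the time interval `[0, T]` with
continuous sample paths: each `W t` is measurable, `W 0 = 0`, the sample paths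
are continuous on `[0, T]`, the increment `W t - W s` is centered Gaussian with
variance `t - s` for `0 ≤ s ≤ t ≤ T`, and increments over disjoint consecutive
time intervals are independent. -/
def IsStandardBrownianMotion {Ω : Type*} [MeasurableSpace Ω] (P : Measure Ω)
    (T : ℝ) (W : ℝ → Ω → ℝ) : Prop :=
  (∀ t, t ∈ Set.Icc 0 T → Measurable (W t)) ∧
  (∀ ω, W 0 ω = 0) ∧
  (∀ ω, ContinuousOn (fun t => W t ω) (Set.Icc 0 T)) ∧
  (∀ s t : ℝ, 0 ≤ s → s ≤ t → t ≤ T →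
    Measure.map (fun ω => W t ω - W s ω) P = gaussianReal 0 (Real.toNNReal (t - s))) ∧
  (∀ (n : ℕ) (t : Fin (n + 1) → ℝ), Monotone t → (∀ i, t i ∈ Set.Icc 0 T) →
    iIndepFun
      (fun (i : Fin n) => fun ω => W (t i.succ) ω - W (t i.castSucc) ω) P)

open Real
open scoped NNReal ENNReal

lemma sq_abs_le_abs_sub_mul_pow_three_add {h y d : ℝ} (hy : 1 ≤ |y|) (hhy : 3 ≤ h * |y|)
    (hd : |d| ≤ 1) : |y| ^ 2 ≤ |y - h * y ^ 3 + d| := by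
  have hh : 0 < h := pos_of_mul_pos_left (by linarith) (abs_nonneg y)
  have hcube : |h * y ^ 3| = h * |y| * |y| ^ 2 := by
    rw [abs_mul, abs_of_pos hh, abs_pow]; ring
  have htri : |h * y ^ 3| ≤ |y - h * y ^ 3 + d| + |y| + |d| := by
    calc |h * y ^ 3| = |-(y - h * y ^ 3 + d) + y + d| := by ring_nf
      _ ≤ |-(y - h * y ^ 3 + d) + y| + |d| := abs_add_le _ _
      _ ≤ |y - h * y ^ 3 + d| + |y| + |d| := by
        grw [abs_add_le, abs_neg]
  nlinarith [mul_le_mul_of_nonneg_right hhy (sq_nonneg |y|)]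

lemma pow_two_pow_le_abs_of_euler_step {h r : ℝ} {y d : ℕ → ℝ} {n : ℕ} (hr : 1 ≤ r)
    (hhr : 3 ≤ h * r) (hy0 : y 0 = 0) (hy : ∀ k ≤ n, y (k + 1) = y k - h * y k ^ 3 + d k)
    (hd0 : r ≤ |d 0|) (hd : ∀ k < n, |d (k + 1)| ≤ 1) : ∀ k ≤ n, r ^ 2 ^ k ≤ |y (k + 1)| := by
  intro k hk
  induction k with
  | zero => simpa [hy 0 hk, hy0] using hd0
  | succ k ih =>
    have hrk := ih (by omega)
    have hr_le : r ≤ r ^ 2 ^ k := le_self_pow₀ hr (by positivity)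
    have hh : 0 ≤ h := by nlinarith
    calc r ^ 2 ^ (k + 1) = (r ^ 2 ^ k) ^ 2 := by rw [pow_succ, pow_mul]
      _ ≤ |y (k + 1)| ^ 2 := by gcongr
      _ ≤ |y (k + 1 + 1)| := by
        rw [hy (k + 1) hk]
        refine sq_abs_le_abs_sub_mul_pow_three_add (by linarith) ?_ (hd k hk)
        nlinarith [mul_le_mul_of_nonneg_left (hr_le.trans hrk) hh]

lemma tendsto_const_mul_pow_sub_mul_pow_atTop {c b : ℝ} (hc : 0 < c) (hb : 1 < b) (K : ℝ)
    (k : ℕ) : Tendsto (fun n : ℕ => c * b ^ n - K * (n : ℝ) ^ k) atTop atTop := by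
  have hratio : Tendsto (fun n : ℕ => c - K * ((n : ℝ) ^ k / b ^ n)) atTop (nhds c) := by
    simpa using tendsto_const_nhds.sub
      ((tendsto_pow_const_div_const_pow_of_one_lt k hb).const_mul K)
  refine ((tendsto_pow_atTop_atTop_of_one_lt hb).atTop_mul_pos hc hratio).congr fun n => ?_
  have : b ^ n ≠ 0 := by positivity
  field_simp

lemma ofReal_mul_gaussianPDFReal_le_gaussianReal_Icc {v : ℝ≥0} (hv : v ≠ 0) {a b c : ℝ}
    (ha : -c ≤ a) (hb : b ≤ c) :
    ENNReal.ofReal ((b - a) * gaussianPDFReal 0 v c) ≤ gaussianReal 0 v (Set.Icc a b) := by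
  rw [gaussianReal_apply _ hv, mul_comm, ENNReal.ofReal_mul (gaussianPDFReal_nonneg _ _ _),
    ← Real.volume_Icc, ← setLIntegral_const]
  refine setLIntegral_mono (measurable_gaussianPDF 0 v) fun x hx => ENNReal.ofReal_le_ofReal ?_
  have hx : x ^ 2 ≤ c ^ 2 := sq_le_sq' (by linarith [hx.1]) (by linarith [hx.2])
  simp only [gaussianPDFReal, sub_zero]
  gcongr

lemma exists_exp_neg_mul_pow_four_le_gaussianPDFReal_pow {T : ℝ} (hT : 0 < T) :
    ∃ K : ℝ, ∀ n : ℕ, 1 ≤ n →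
      exp (-(K * n ^ 4)) ≤ gaussianPDFReal 0 (T / n).toNNReal (3 * n / T + 3) ^ n := by
  set C := (√(2 * π * T))⁻¹
  set a := (3 / T + 3) ^ 2 / (2 * T)
  refine ⟨|log C| + a, fun n hn => ?_⟩
  have hx : (1 : ℝ) ≤ n := by exact_mod_cast hn
  have hC : 0 < C := by positivity
  have hexponent : (3 * n / T + 3) ^ 2 / (2 * (T / n)) ≤ a * n ^ 3 := by
    have hc : 3 * n / T + 3 ≤ (3 / T + 3) * n := by
      rw [add_mul, mul_div_right_comm]; nlinarith
    calc (3 * n / T + 3) ^ 2 / (2 * (T / n)) = (3 * n / T + 3) ^ 2 * n / (2 * T) := by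
          field_simp
      _ ≤ ((3 / T + 3) * n) ^ 2 * n / (2 * T) := by gcongr
      _ = a * n ^ 3 := by ring
  have hpdf : exp (log C - a * n ^ 3) ≤ gaussianPDFReal 0 (T / n).toNNReal (3 * n / T + 3) := by
    rw [gaussianPDFReal, Real.coe_toNNReal _ (by positivity), sub_zero, exp_sub, exp_log hC,
      div_eq_mul_inv, ← exp_neg, neg_div]
    gcongr
    exact inv_anti₀ (by positivity) (sqrt_le_sqrt (by gcongr; exact div_le_self hT.le hx))
  calc exp (-((|log C| + a) * n ^ 4)) ≤ exp (log C - a * n ^ 3) ^ n := by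
        rw [← exp_nat_mul]
        gcongr
        nlinarith [neg_abs_le (log C), le_self_pow₀ hx (by norm_num : 4 ≠ 0),
          abs_nonneg (log C)]
    _ ≤ _ := by gcongr

lemma tendsto_two_pow_two_pow_mul_gaussianPDFReal_pow {T : ℝ} (hT : 0 < T) :
    Tendsto (fun N : ℕ => (2 : ℝ) ^ 2 ^ N *
      gaussianPDFReal 0 (T / (N + 1 : ℕ)).toNNReal (3 * (N + 1 : ℕ) / T + 3) ^ (N + 1))
      atTop atTop := by
  obtain ⟨K, hK⟩ := exists_exp_neg_mul_pow_four_le_gaussianPDFReal_pow hT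
  have hlower := tendsto_exp_atTop.comp <|
    (tendsto_const_mul_pow_sub_mul_pow_atTop (by positivity : 0 < log 2 / 2) one_lt_two K 4).comp
      (tendsto_add_atTop_nat 1)
  refine tendsto_atTop_mono (fun N => ?_) hlower
  have hpow : exp (log 2 / 2 * 2 ^ (N + 1)) = (2 : ℝ) ^ 2 ^ N := by
    rw [show log 2 / 2 * 2 ^ (N + 1) = ((2 ^ N : ℕ) : ℝ) * log 2 by push_cast; ring,
      exp_nat_mul, exp_log two_pos]
  simp only [Function.comp_apply, sub_eq_add_neg, exp_add, hpow]
  gcongr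
  exact hK (N + 1) (by omega)

lemma ofReal_mul_measure_le_lintegral {α : Type*} [MeasurableSpace α] {μ : Measure α}
    {A : Set α} (hA : MeasurableSet A) {c : ℝ} {f : α → ℝ} (hf : ∀ x ∈ A, c ≤ f x) :
    ENNReal.ofReal c * μ A ≤ ∫⁻ x, ENNReal.ofReal (f x) ∂μ :=
  calc ENNReal.ofReal c * μ A = ∫⁻ _ in A, ENNReal.ofReal c ∂μ := (setLIntegral_const _ _).symm
    _ ≤ ∫⁻ x in A, ENNReal.ofReal (f x) ∂μ :=
      setLIntegral_mono' hA fun x hx => ENNReal.ofReal_le_ofReal (hf x hx)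
    _ ≤ _ := setLIntegral_le_lintegral _ _

noncomputable def gridIncrement {Ω : Type*} (W : ℝ → Ω → ℝ) (T : ℝ) (n k : ℕ) (ω : Ω) : ℝ :=
  W ((k + 1) * T / n) ω - W (k * T / n) ω

lemma natCast_mul_div_mem_Icc {T : ℝ} (hT : 0 ≤ T) {k n : ℕ} (hk : k ≤ n) :
    (k : ℝ) * T / n ∈ Set.Icc 0 T := by
  refine ⟨by positivity, ?_⟩
  rw [mul_div_right_comm]
  exact mul_le_of_le_one_left hT (div_le_one_of_le₀ (by exact_mod_cast hk) (by positivity))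

namespace IsStandardBrownianMotion

variable {Ω : Type*} [MeasurableSpace Ω] {P : Measure Ω} {T : ℝ} {W : ℝ → Ω → ℝ}

lemma measurable_gridIncrement (hW : IsStandardBrownianMotion P T W) (hT : 0 ≤ T) {n k : ℕ}
    (hk : k < n) : Measurable (gridIncrement W T n k) := by
  have hk' := natCast_mul_div_mem_Icc hT hk
  push_cast at hk'
  exact (hW.1 _ hk').sub (hW.1 _ (natCast_mul_div_mem_Icc hT hk.le))

lemma measure_iInter_gridIncrement_preimage (hW : IsStandardBrownianMotion P T W) (hT : 0 ≤ T)
    (n : ℕ) {B : Fin n → Set ℝ} (hB : ∀ i, MeasurableSet (B i)) :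
    P (⋂ i : Fin n, gridIncrement W T n i ⁻¹' B i) =
      ∏ i, gaussianReal 0 (T / n).toNNReal (B i) := by
  have hind := hW.2.2.2.2 n (fun i => (i : ℕ) * T / n)
    (fun i j hij => by dsimp only; gcongr; exact hij)
    (fun i => natCast_mul_div_mem_Icc hT (by omega))
  have hincr : (fun (i : Fin n) ω => W (((i.succ : ℕ) : ℝ) * T / n) ω
      - W (((i.castSucc : ℕ) : ℝ) * T / n) ω) = fun i : Fin n => gridIncrement W T n i := by
    ext i ω
    simp [gridIncrement]
  rw [hincr] at hind
  rw [hind.meas_iInter fun i => ⟨B i, hB i, rfl⟩]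
  refine Finset.prod_congr rfl fun i _ => ?_
  have hi := natCast_mul_div_mem_Icc hT (k := i) (n := n) (by omega)
  have hi' := natCast_mul_div_mem_Icc hT (k := i + 1) (n := n) (by omega)
  push_cast at hi'
  have hmap : P.map (gridIncrement W T n i) = gaussianReal 0 (T / n).toNNReal := by
    rw [show T / n = ((i : ℕ) + 1) * T / n - (i : ℕ) * T / n by ring]
    exact hW.2.2.2.1 _ _ hi.1 (by gcongr; linarith) hi'.2
  rw [← hmap, Measure.map_apply (hW.measurable_gridIncrement hT i.2) (hB i)]

lemma ofReal_gaussianPDFReal_pow_le_measure (hW : IsStandardBrownianMotion P T W) (hT : 0 < T)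
    (N : ℕ) {r : ℝ} (hr : 0 ≤ r) :
    ENNReal.ofReal (gaussianPDFReal 0 (T / (N + 1 : ℕ)).toNNReal (r + 1)) ^ (N + 1) ≤
      P (⋂ i : Fin (N + 1), gridIncrement W T (N + 1) i ⁻¹'
        Matrix.vecCons (Set.Icc r (r + 1)) (fun _ => Set.Icc 0 1) i) := by
  have hv : (T / (N + 1 : ℕ)).toNNReal ≠ 0 := (Real.toNNReal_pos.mpr (by positivity)).ne'
  rw [hW.measure_iInter_gridIncrement_preimage hT.le (N + 1)
      (fun i => by induction i using Fin.cases <;> simp [measurableSet_Icc]),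
    Fin.prod_univ_succ]
  simp only [Matrix.cons_val_zero, Matrix.cons_val_succ, Finset.prod_const, Finset.card_univ,
    Fintype.card_fin, pow_succ']
  gcongr
  · simpa using ofReal_mul_gaussianPDFReal_le_gaussianReal_Icc hv (a := r) (b := r + 1)
      (by linarith) le_rfl
  · simpa using ofReal_mul_gaussianPDFReal_le_gaussianReal_Icc hv (a := 0) (b := 1) (c := r + 1)
      (by linarith) (by linarith)

end IsStandardBrownianMotion

lemma ofReal_le_lintegral_abs_euler_rpow {Ω : Type*} [MeasureSpace Ω] {T : ℝ} (hT : 0 < T)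
    {W : ℝ → Ω → ℝ} (hW : IsStandardBrownianMotion ℙ T W) {y : ℕ → Ω → ℝ} {N : ℕ}
    (hy0 : ∀ ω, y 0 ω = 0)
    (hy : ∀ k ≤ N, ∀ ω,
      y (k + 1) ω = y k ω - T / (N + 1 : ℕ) * y k ω ^ 3 + gridIncrement W T (N + 1) k ω)
    {p : ℝ} (hp : 1 ≤ p) :
    ENNReal.ofReal ((2 : ℝ) ^ 2 ^ N *
      gaussianPDFReal 0 (T / (N + 1 : ℕ)).toNNReal (3 * (N + 1 : ℕ) / T + 3) ^ (N + 1)) ≤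
      ∫⁻ ω, ENNReal.ofReal (|y (N + 1) ω| ^ p) := by
  set r : ℝ := 3 * (N + 1 : ℕ) / T + 2
  have hr : 2 ≤ r := by simp only [r]; linarith [show 0 ≤ 3 * ((N + 1 : ℕ) : ℝ) / T by positivity]
  have hhr : 3 ≤ T / (N + 1 : ℕ) * r := by
    have : T / (N + 1 : ℕ) * r = 3 + 2 * (T / (N + 1 : ℕ)) := by simp only [r]; field_simp
    rw [this]
    linarith [show 0 ≤ T / (N + 1 : ℕ) by positivity]
  set A := ⋂ i : Fin (N + 1), gridIncrement W T (N + 1) i ⁻¹'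
    Matrix.vecCons (Set.Icc r (r + 1)) (fun _ => Set.Icc 0 1) i
  have hA : MeasurableSet A := MeasurableSet.iInter fun i =>
    hW.measurable_gridIncrement hT.le i.2 (by induction i using Fin.cases <;> simp)
  have hgrowth : ∀ ω ∈ A, (2 : ℝ) ^ 2 ^ N ≤ |y (N + 1) ω| ^ p := by
    intro ω hω
    simp only [A, Set.mem_iInter, Set.mem_preimage] at hω
    have hd0 : r ≤ |gridIncrement W T (N + 1) 0 ω| := by
      simpa using (hω 0).1.trans (le_abs_self _)
    have hd : ∀ k < N, |gridIncrement W T (N + 1) (k + 1) ω| ≤ 1 := fun k hk => by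
      have := hω (Fin.succ ⟨k, hk⟩)
      simp only [Matrix.cons_val_succ, Set.mem_Icc, Fin.val_succ] at this
      exact abs_le.mpr ⟨by linarith, this.2⟩
    have hY := pow_two_pow_le_abs_of_euler_step (y := fun k => y k ω)
      (d := fun k => gridIncrement W T (N + 1) k ω) (by linarith) hhr (hy0 ω)
      (fun k hk => hy k hk ω) hd0 hd N le_rfl
    have h2r : (2 : ℝ) ^ 2 ^ N ≤ r ^ 2 ^ N := by gcongr
    have hone : (1 : ℝ) ≤ 2 ^ 2 ^ N := one_le_pow₀ one_le_two
    exact (h2r.trans hY).trans (self_le_rpow_of_one_le (by linarith) hp)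
  rw [show 3 * ((N + 1 : ℕ) : ℝ) / T + 3 = r + 1 by simp only [r]; ring,
    ENNReal.ofReal_mul (by positivity), ENNReal.ofReal_pow (gaussianPDFReal_nonneg _ _ _)]
  calc _ ≤ ENNReal.ofReal (2 ^ 2 ^ N) * ℙ A := by
        gcongr
        exact hW.ofReal_gaussianPDFReal_pow_le_measure hT N (by linarith)
    _ ≤ _ := ofReal_mul_measure_le_lintegral hA hgrowth

theorem stmt_6_general {Ω : Type*} [MeasureSpace Ω]
    (T : ℝ) (hT : 0 < T)
    (W : ℝ → Ω → ℝ) (hW : IsStandardBrownianMotion ℙ T W)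
    (Y : ℕ → ℕ → Ω → ℝ)
    (hY0 : ∀ N, 1 ≤ N → ∀ ω, Y N 0 ω = 0)
    (hYrec : ∀ N, 1 ≤ N → ∀ k < N, ∀ ω,
      Y N (k + 1) ω = Y N k ω - (T / N) * (Y N k ω) ^ 3
        + (W (((k : ℝ) + 1) * T / N) ω - W ((k : ℝ) * T / N) ω)) :
    ∀ p : ℝ, 1 ≤ p →
      Tendsto (fun N : ℕ => ∫⁻ ω, ENNReal.ofReal (|Y N N ω| ^ p) ∂ℙ) atTop (nhds ⊤) := by
  intro p hp
  rw [← tendsto_add_atTop_iff_nat 1]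
  refine tendsto_nhds_top_mono
    (ENNReal.tendsto_ofReal_atTop.comp (tendsto_two_pow_two_pow_mul_gaussianPDFReal_pow hT))
    (Eventually.of_forall fun N => ?_)
  exact ofReal_le_lintegral_abs_euler_rpow hT hW (hY0 (N + 1) (by omega))
    (fun k hk => hYrec (N + 1) (by omega) k (by omega)) hp

theorem stmt_6 {Ω : Type*} [MeasureSpace Ω] [IsProbabilityMeasure (ℙ : Measure Ω)]
    (T : ℝ) (hT : 0 < T)
    (W : ℝ → Ω → ℝ) (hW : IsStandardBrownianMotion ℙ T W)
    (Y : ℕ → ℕ → Ω → ℝ)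
    (hY0 : ∀ N, 1 ≤ N → ∀ ω, Y N 0 ω = 0)
    (hYrec : ∀ N, 1 ≤ N → ∀ k < N, ∀ ω,
      Y N (k + 1) ω = Y N k ω - (T / N) * (Y N k ω) ^ 3
        + (W (((k : ℝ) + 1) * T / N) ω - W ((k : ℝ) * T / N) ω)) :
    ∀ p : ℝ, 1 ≤ p →
      Tendsto (fun N : ℕ => ∫⁻ ω, ENNReal.ofReal (|Y N N ω| ^ p) ∂ℙ) atTop (nhds ⊤) :=
  stmt_6_general T hT W hW Y hY0 hYrec
end

section
/- Let T > 0, let (Ω, F, P) be a probability space carrying a standard Brownian motion W : [0,T] × Ω → ℝ with continuous sample paths, let ξ : Ω → ℝ be a random variable independent of W, and let f, g : ℝ → ℝ be Borel measurable functions. Assume P[g(ξ) ≠ 0] > 0 and that there exist constants C > 0, β > 1 and α with 0 ≤ α < β such that |g(x)| ≥ |x|^β / C and |f(x)| ≤ C·|x|^α for all x ∈ ℝ with |x| ≥ C. For each N ∈ ℕ (N ≥ 1) define Y^N_0 := ξ and Y^N_{k+1} := Y^N_k + (T/N)·f(Y^N_k) + g(Y^N_k)·(W_{(k+1)T/N}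 − W_{kT/N}) for k = 0, 1, …, N−1. Then lim_{N → ∞} E[|Y^N_N|^p] = ∞ for every p ∈ [1, ∞). -/
/-!
Let `1 < γ < β` with `α < γ`. On the event that `ξ` lies in a set where `|x|`, `|f x|` and
`1 / |g x|` are bounded by `K` and every Brownian increment of the time grid exceeds `N`, the
first Euler step already has size about `N / K`; from then on the dominating diffusion term forces
`|Y_{k+1}| ≥ |Y_k| ^ γ`, so `|Y_N| ≥ exp (γ ^ (N - 1))`. By independence and a Gaussian tail
bound the event has probability at least `c · exp (-O(N ^ 4))`, which loses against the doubly
exponential size of `|Y_N|`.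
-/

open MeasureTheory ProbabilityTheory Filter

open Real

lemma abs_sub_abs_sub_abs_le_abs_add_add (a b c : ℝ) : |c| - |a| - |b| ≤ |a + b + c| := by
  have h := abs_add_le (a + b + c) (-a - b)
  rw [show a + b + c + (-a - b) = c by ring, show -a - b = -(a + b) by ring, abs_neg] at h
  linarith [abs_add_le a b]

lemma eventually_rpow_add_add_le_rpow_div {C α β γ : ℝ} (hC : 0 < C) (hγ : 1 ≤ γ)
    (hαγ : α < γ) (hγβ : γ < β) (c : ℝ) :
    ∀ᶠ r in atTop, r ^ γ + r + c * r ^ α ≤ r ^ β / C := by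
  filter_upwards [(tendsto_rpow_atTop (sub_pos.2 hγβ)).eventually_ge_atTop (3 * C),
    (tendsto_rpow_atTop (sub_pos.2 hαγ)).eventually_ge_atTop c, eventually_ge_atTop 1]
    with r hβγ hγα hr
  have hr0 : 0 < r := one_pos.trans_le hr
  have hsplit : ∀ δ ε : ℝ, r ^ δ * r ^ (ε - δ) = r ^ ε := fun δ ε => by
    rw [← rpow_add hr0, add_sub_cancel]
  have hβ : 3 * r ^ γ ≤ r ^ β / C := by
    rw [le_div_iff₀ hC, ← hsplit γ β]
    nlinarith [rpow_pos_of_pos hr0 γ]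
  have hα : c * r ^ α ≤ r ^ γ := by
    rw [← hsplit α γ]
    nlinarith [rpow_pos_of_pos hr0 α]
  have hlin : r ≤ r ^ γ := self_le_rpow_of_one_le hr hγ
  linarith

lemma rpow_pow_le_of_rpow_le_succ {γ R b : ℝ} (hγ : 1 ≤ γ) (hb : 1 ≤ b) (hRb : R ≤ b)
    {u : ℕ → ℝ} {n : ℕ} (hu0 : b ≤ u 0) (hu : ∀ k < n, R ≤ u k → u k ^ γ ≤ u (k + 1)) :
    ∀ k ≤ n, b ^ (γ ^ k) ≤ u k := by
  intro k
  induction k with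
  | zero => simpa using hu0
  | succ k ih =>
    intro hk
    have hbk : b ^ (γ ^ k) ≤ u k := ih (by omega)
    have hRk : R ≤ u k := hRb.trans ((self_le_rpow_of_one_le hb (one_le_pow₀ hγ)).trans hbk)
    calc b ^ (γ ^ (k + 1)) = (b ^ (γ ^ k)) ^ γ := by
          rw [pow_succ, rpow_mul (zero_le_one.trans hb)]
      _ ≤ u k ^ γ := rpow_le_rpow (rpow_nonneg (zero_le_one.trans hb) _) hbk (by linarith)
      _ ≤ u (k + 1) := hu k (by omega) hRk

lemma tendsto_mul_pow_sub_mul_pow_atTop {γ a : ℝ} (hγ : 1 < γ) (ha : 0 < a) (c : ℝ) (k : ℕ) :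
    Tendsto (fun n : ℕ => a * γ ^ n - c * (n : ℝ) ^ k) atTop atTop := by
  have hratio : Tendsto (fun n : ℕ => a - c * ((n : ℝ) ^ k / γ ^ n)) atTop (nhds a) := by
    simpa using (tendsto_pow_const_div_const_pow_of_one_lt k hγ).const_mul c |>.const_sub a
  refine ((tendsto_pow_atTop_atTop_of_one_lt hγ).atTop_mul_pos ha hratio).congr fun n => ?_
  have : γ ^ n ≠ 0 := (pow_pos (one_pos.trans hγ) n).ne'
  field_simp

section EulerStep

variable {f g : ℝ → ℝ}

def nondegenerateSet (f g : ℝ → ℝ) (K : ℝ) : Set ℝ :=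
  {x | |x| ≤ K ∧ |f x| ≤ K ∧ K⁻¹ ≤ |g x|}

lemma measurableSet_nondegenerateSet (hf : Measurable f) (hg : Measurable g) (K : ℝ) :
    MeasurableSet (nondegenerateSet f g K) :=
  (measurableSet_le measurable_id.abs measurable_const).inter
    ((measurableSet_le hf.abs measurable_const).inter (measurableSet_le measurable_const hg.abs))

lemma exists_pos_measure_preimage_nondegenerateSet {Ω : Type*} [MeasurableSpace Ω]
    {P : Measure Ω} {ξ : Ω → ℝ} (hgξ : 0 < P {ω | g (ξ ω) ≠ 0}) :
    ∃ K : ℝ, 0 < K ∧ 0 < P (ξ ⁻¹' nondegenerateSet f g K) := by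
  have hcover : {ω | g (ξ ω) ≠ 0} ⊆ ⋃ n : ℕ, ξ ⁻¹' nondegenerateSet f g (n + 1) := by
    intro ω hω
    set x := ξ ω
    have hgx : 0 < |g x| := abs_pos.2 hω
    obtain ⟨n, hn⟩ := exists_nat_ge (max (max |x| |f x|) |g x|⁻¹)
    refine Set.mem_iUnion.2 ⟨n, ?_, ?_, ?_⟩
    · linarith [le_max_left |x| |f x|, le_max_left (max |x| |f x|) |g x|⁻¹]
    · linarith [le_max_right |x| |f x|, le_max_left (max |x| |f x|) |g x|⁻¹]
    · exact inv_le_of_inv_le₀ hgx (by linarith [le_max_right (max |x| |f x|) |g x|⁻¹])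
  obtain ⟨n, hn⟩ : ∃ n : ℕ, P (ξ ⁻¹' nondegenerateSet f g (n + 1)) ≠ 0 := by
    by_contra! h
    exact hgξ.ne' (measure_mono_null hcover (measure_iUnion_null h))
  exact ⟨n + 1, by positivity, pos_iff_ne_zero.2 hn⟩

lemma sub_sub_le_abs_eulerStep {K h T x D : ℝ} (hx : x ∈ nondegenerateSet f g K)
    (h0 : 0 ≤ h) (hhT : h ≤ T) (hD : 0 ≤ D) :
    D / K - K - T * K ≤ |x + h * f x + g x * D| := by
  obtain ⟨hxK, hfK, hgK⟩ := hx
  have hg : D / K ≤ |g x * D| := by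
    rw [abs_mul, abs_of_nonneg hD, div_eq_inv_mul]
    exact mul_le_mul_of_nonneg_right hgK hD
  have hf : |h * f x| ≤ T * K := by
    rw [abs_mul, abs_of_nonneg h0]
    exact mul_le_mul hhT hfK (abs_nonneg _) (h0.trans hhT)
  linarith [abs_sub_abs_sub_abs_le_abs_add_add x (h * f x) (g x * D)]

lemma exists_rpow_le_abs_eulerStep {C α β γ : ℝ} (hC : 0 < C) (hγ : 1 ≤ γ) (hαγ : α < γ)
    (hγβ : γ < β) (hggrow : ∀ x : ℝ, C ≤ |x| → |x| ^ β / C ≤ |g x|)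
    (hfbound : ∀ x : ℝ, C ≤ |x| → |f x| ≤ C * |x| ^ α) (T : ℝ) :
    ∃ R, ∀ y h D : ℝ, R ≤ |y| → 0 ≤ h → h ≤ T → 1 ≤ D →
      |y| ^ γ ≤ |y + h * f y + g y * D| := by
  obtain ⟨R, hR⟩ := eventually_atTop.1
    ((eventually_rpow_add_add_le_rpow_div hC hγ hαγ hγβ (T * C)).and (eventually_ge_atTop C))
  refine ⟨R, fun y h D hy h0 hhT hD => ?_⟩
  obtain ⟨hgrowth, hCy⟩ := hR |y| hy
  have hg : |y| ^ β / C ≤ |g y * D| := by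
    rw [abs_mul, abs_of_nonneg (zero_le_one.trans hD)]
    exact (hggrow y hCy).trans (le_mul_of_one_le_right (abs_nonneg _) hD)
  have hf : |h * f y| ≤ T * C * |y| ^ α := by
    rw [abs_mul, abs_of_nonneg h0, mul_assoc]
    exact mul_le_mul hhT (hfbound y hCy) (abs_nonneg _) (h0.trans hhT)
  linarith [abs_sub_abs_sub_abs_le_abs_add_add y (h * f y) (g y * D)]

lemma exp_pow_le_abs_of_eulerRecursion {γ R K h T : ℝ} {N : ℕ} {y D : ℕ → ℝ}
    (hR : ∀ y h D : ℝ, R ≤ |y| → 0 ≤ h → h ≤ T → 1 ≤ D → |y| ^ γ ≤ |y + h * f y + g y * D|)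
    (hγ : 1 ≤ γ) (hK : 0 ≤ K) (h0 : 0 ≤ h) (hhT : h ≤ T) (hN : 1 ≤ N)
    (hlarge : max R (exp 1) ≤ N / K - K - T * K)
    (hrec : ∀ k < N, y (k + 1) = y k + h * f (y k) + g (y k) * D k)
    (hD : ∀ k < N, (N : ℝ) ≤ D k) (hy0 : y 0 ∈ nondegenerateSet f g K) :
    exp (γ ^ (N - 1)) ≤ |y N| := by
  have hD1 : ∀ k < N, 1 ≤ D k := fun k hk => (Nat.one_le_cast.2 hN).trans (hD k hk)
  have hfirst : N / K - K - T * K ≤ |y 1| := by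
    rw [hrec 0 hN]
    refine le_trans ?_ (sub_sub_le_abs_eulerStep hy0 h0 hhT (by linarith [hD1 0 hN]))
    gcongr
    exact hD 0 hN
  have hgrowth := rpow_pow_le_of_rpow_le_succ (u := fun k => |y (k + 1)|) (n := N - 1) hγ
    ((one_le_exp zero_le_one).trans ((le_max_right _ _).trans hlarge))
    ((le_max_left _ _).trans hlarge) hfirst
    (fun k hk hRk => by
      rw [hrec (k + 1) (by omega)]
      exact hR _ _ _ hRk h0 hhT (hD1 _ (by omega)))
    (N - 1) le_rfl
  calc exp (γ ^ (N - 1)) = exp 1 ^ (γ ^ (N - 1)) := (exp_one_rpow _).symm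
    _ ≤ (N / K - K - T * K) ^ (γ ^ (N - 1)) :=
        rpow_le_rpow (exp_pos 1).le ((le_max_right _ _).trans hlarge) (pow_nonneg (by linarith) _)
    _ ≤ |y N| := by simpa [Nat.sub_add_cancel hN] using hgrowth

end EulerStep

lemma ofReal_le_gaussianReal_Ici {v V : ℝ} (hv : 0 < v) (hvV : v ≤ V) {a : ℝ} (ha : 0 ≤ a) :
    ENNReal.ofReal ((√(2 * π * V))⁻¹ * exp (-(a + 1) ^ 2 / (2 * v)))
      ≤ gaussianReal 0 v.toNNReal (Set.Ici a) := by
  set c := (√(2 * π * V))⁻¹ * exp (-(a + 1) ^ 2 / (2 * v)) with hc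
  have hdensity : ∀ x ∈ Set.Icc a (a + 1), c ≤ gaussianPDFReal 0 v.toNNReal x := by
    intro x hx
    rw [hc, gaussianPDFReal, Real.coe_toNNReal _ hv.le, sub_zero]
    gcongr
    · linarith [hx.1]
    · exact hx.2
  rw [gaussianReal_apply 0 (by simpa using hv)]
  calc ENNReal.ofReal c = ∫⁻ _ in Set.Icc a (a + 1), ENNReal.ofReal c := by simp
    _ ≤ ∫⁻ x in Set.Icc a (a + 1), gaussianPDF 0 v.toNNReal x :=
        setLIntegral_mono' measurableSet_Icc fun x hx => ENNReal.ofReal_le_ofReal (hdensity x hx)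
    _ ≤ ∫⁻ x in Set.Ici a, gaussianPDF 0 v.toNNReal x := lintegral_mono_set fun x hx => hx.1

lemma tendsto_exp_pow_mul_pow_atTop {γ a T : ℝ} (hγ : 1 < γ) (ha : 0 < a) (hT : 0 < T) :
    Tendsto (fun N : ℕ => exp (γ ^ (N - 1)) * (a * exp (-((N : ℝ) + 1) ^ 2 / (2 * (T / N)))) ^ N)
      atTop atTop := by
  refine tendsto_atTop_mono' _ ?_ (tendsto_exp_atTop.comp
    (tendsto_mul_pow_sub_mul_pow_atTop hγ (inv_pos.2 (one_pos.trans hγ)) (2 / T + |log a|) 4))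
  filter_upwards [eventually_ge_atTop 1] with N hN
  set n : ℝ := (N : ℝ)
  have hn : 1 ≤ n := Nat.one_le_cast.2 hN
  have hpow : γ⁻¹ * γ ^ N = γ ^ (N - 1) := by
    rw [← Nat.sub_add_cancel hN, pow_succ, Nat.add_sub_cancel]
    field_simp
  have hexp : exp (γ ^ (N - 1)) * (a * exp (-(n + 1) ^ 2 / (2 * (T / n)))) ^ N
      = exp (γ ^ (N - 1) + n * log a - n ^ 2 * (n + 1) ^ 2 / (2 * T)) := by
    rw [mul_pow, ← exp_log ha, ← exp_nat_mul, ← exp_nat_mul, exp_log ha, ← exp_add, ← exp_add]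
    congr 1
    field_simp
    ring
  have hlog : -(|log a| * n ^ 4) ≤ n * log a := by
    nlinarith [neg_abs_le (log a), abs_nonneg (log a), pow_le_pow_right₀ hn (by norm_num : 1 ≤ 4)]
  have hquartic : n ^ 2 * (n + 1) ^ 2 / (2 * T) ≤ 2 / T * n ^ 4 := by
    rw [div_le_iff₀ (by positivity)]
    field_simp
    nlinarith
  rw [Function.comp_apply, hexp, exp_le_exp, hpow]
  nlinarith

lemma mul_measure_le_lintegral_of_forall_mem {α : Type*} [MeasurableSpace α] {μ : Measure α}
    {s : Set α} (hs : MeasurableSet s) {c : ENNReal} {F : α → ENNReal} (hF : ∀ x ∈ s, c ≤ F x) :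
    c * μ s ≤ ∫⁻ x, F x ∂μ :=
  calc c * μ s = ∫⁻ _ in s, c ∂μ := (setLIntegral_const s c).symm
    _ ≤ ∫⁻ x in s, F x ∂μ := setLIntegral_mono' hs hF
    _ ≤ ∫⁻ x, F x ∂μ := setLIntegral_le_lintegral s F

section Grid

variable {Ω : Type*} [MeasurableSpace Ω] {P : Measure Ω} {T : ℝ} {W : ℝ → Ω → ℝ}

def gridIncrementsGe (W : ℝ → Ω → ℝ) (T : ℝ) (N : ℕ) (x : ℝ) : Set Ω :=
  ⋂ k : Fin N, {ω | x ≤ W (((k : ℕ) + 1) * T / N) ω - W ((k : ℕ) * T / N) ω}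

lemma gridTime_mem_Icc (hT : 0 ≤ T) {N : ℕ} (j : Fin (N + 1)) :
    ((j : ℕ) : ℝ) * T / N ∈ Set.Icc 0 T := by
  refine ⟨by positivity, div_le_of_le_mul₀ (Nat.cast_nonneg _) hT ?_⟩
  rw [mul_comm]
  exact mul_le_mul_of_nonneg_left (by exact_mod_cast Nat.lt_succ_iff.1 j.isLt) hT

lemma gridTime_monotone (hT : 0 ≤ T) (N : ℕ) :
    Monotone fun j : Fin (N + 1) => ((j : ℕ) : ℝ) * T / N := by
  intro i j hij
  have : ((i : ℕ) : ℝ) ≤ (j : ℕ) := by exact_mod_cast hij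
  dsimp only
  gcongr

lemma measure_preimage_inter_gridIncrementsGe {ξ : Ω → ℝ}
    (hindep : IndepFun ξ (fun ω => (fun t => W t ω : ℝ → ℝ)) P) {S : Set ℝ}
    (hS : MeasurableSet S) (N : ℕ) (x : ℝ) :
    P (ξ ⁻¹' S ∩ gridIncrementsGe W T N x) = P (ξ ⁻¹' S) * P (gridIncrementsGe W T N x) := by
  have hpaths : MeasurableSet (⋂ k : Fin N,
      {w : ℝ → ℝ | x ≤ w (((k : ℕ) + 1) * T / N) - w ((k : ℕ) * T / N)}) :=
    MeasurableSet.iInter fun k => measurableSet_le measurable_const (by fun_prop)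
  have hsplit := hindep.measure_inter_preimage_eq_mul S _ hS hpaths
  rwa [Set.preimage_iInter] at hsplit

namespace IsStandardBrownianMotion

lemma measurableSet_gridIncrementsGe (hW : IsStandardBrownianMotion P T W) (hT : 0 ≤ T)
    (N : ℕ) (x : ℝ) : MeasurableSet (gridIncrementsGe W T N x) := by
  refine MeasurableSet.iInter fun k => measurableSet_le measurable_const ?_
  have hsucc := gridTime_mem_Icc hT k.succ
  have hcast := gridTime_mem_Icc hT k.castSucc
  simp only [Fin.val_succ, Nat.cast_add, Nat.cast_one, Fin.val_castSucc] at hsucc hcast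
  exact (hW.1 _ hsucc).sub (hW.1 _ hcast)

lemma ofReal_pow_le_measure_gridIncrementsGe (hW : IsStandardBrownianMotion P T W) (hT : 0 < T)
    {N : ℕ} (hN : 1 ≤ N) {x : ℝ} (hx : 0 ≤ x) :
    ENNReal.ofReal ((√(2 * π * T))⁻¹ * exp (-(x + 1) ^ 2 / (2 * (T / N)))) ^ N
      ≤ P (gridIncrementsGe W T N x) := by
  obtain ⟨hmeas, -, -, hlaw, hindep⟩ := hW
  set t : Fin (N + 1) → ℝ := fun j => ((j : ℕ) : ℝ) * T / N with ht
  have htT : ∀ j, t j ∈ Set.Icc 0 T := gridTime_mem_Icc hT.le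
  have hmono : Monotone t := gridTime_monotone hT.le N
  have hincrement : ∀ k : Fin N,
      P ((fun ω => W (t k.succ) ω - W (t k.castSucc) ω) ⁻¹' Set.Ici x)
        = gaussianReal 0 (T / N).toNNReal (Set.Ici x) := by
    intro k
    have hm : Measurable fun ω => W (t k.succ) ω - W (t k.castSucc) ω :=
      (hmeas _ (htT _)).sub (hmeas _ (htT _))
    rw [← Measure.map_apply hm measurableSet_Ici,
      hlaw _ _ (htT _).1 (hmono (Fin.castSucc_le_succ k)) (htT _).2]
    congr 3
    simp only [ht, Fin.val_succ, Fin.val_castSucc, Nat.cast_add, Nat.cast_one]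
    ring
  have hevent : gridIncrementsGe W T N x
      = ⋂ k ∈ (Finset.univ : Finset (Fin N)),
          (fun ω => W (t k.succ) ω - W (t k.castSucc) ω) ⁻¹' Set.Ici x := by
    simp [gridIncrementsGe, ht, Set.preimage]
  rw [hevent, (hindep N t hmono htT).measure_inter_preimage_eq_mul Finset.univ
    (fun _ _ => measurableSet_Ici), Finset.prod_congr rfl fun k _ => hincrement k,
    Finset.prod_const, Finset.card_univ, Fintype.card_fin]
  gcongr
  exact ofReal_le_gaussianReal_Ici (by positivity) (div_le_self hT.le (by exact_mod_cast hN)) hx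

lemma mul_ofReal_pow_le_measure_preimage_inter (hW : IsStandardBrownianMotion P T W)
    (hT : 0 < T) {ξ : Ω → ℝ} (hindep : IndepFun ξ (fun ω => (fun t => W t ω : ℝ → ℝ)) P)
    {S : Set ℝ} (hS : MeasurableSet S) {N : ℕ} (hN : 1 ≤ N) {x : ℝ} (hx : 0 ≤ x) :
    P (ξ ⁻¹' S) * ENNReal.ofReal ((√(2 * π * T))⁻¹ * exp (-(x + 1) ^ 2 / (2 * (T / N)))) ^ N
      ≤ P (ξ ⁻¹' S ∩ gridIncrementsGe W T N x) := by
  rw [measure_preimage_inter_gridIncrementsGe hindep hS]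
  gcongr
  exact hW.ofReal_pow_le_measure_gridIncrementsGe hT hN hx

end IsStandardBrownianMotion

end Grid

theorem stmt_14_general {Ω : Type*} [MeasurableSpace Ω] (P : Measure Ω) [IsProbabilityMeasure P]
    (T : ℝ) (hT : 0 < T)
    (W : ℝ → Ω → ℝ) (hW : IsStandardBrownianMotion P T W)
    (ξ : Ω → ℝ) (hξ : Measurable ξ)
    (hindep : IndepFun ξ (fun ω => (fun t => W t ω : ℝ → ℝ)) P)
    (f g : ℝ → ℝ) (hf : Measurable f) (hg : Measurable g)
    (hgξ : 0 < P {ω | g (ξ ω) ≠ 0})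
    (C α β : ℝ) (hC : 0 < C) (hβ : 1 < β) (hαβ : α < β)
    (hggrow : ∀ x : ℝ, C ≤ |x| → |x| ^ β / C ≤ |g x|)
    (hfbound : ∀ x : ℝ, C ≤ |x| → |f x| ≤ C * |x| ^ α)
    (Y : ℕ → ℕ → Ω → ℝ)
    (hY0 : ∀ N, 1 ≤ N → ∀ ω, Y N 0 ω = ξ ω)
    (hYrec : ∀ N, 1 ≤ N → ∀ k < N, ∀ ω,
      Y N (k + 1) ω = Y N k ω + (T / N) * f (Y N k ω)
        + g (Y N k ω) * (W (((k : ℝ) + 1) * T / N) ω - W ((k : ℝ) * T / N) ω)) :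
    ∀ p : ℝ, 1 ≤ p →
      Tendsto (fun N : ℕ => ∫⁻ ω, ENNReal.ofReal (|Y N N ω| ^ p) ∂P) atTop (nhds ⊤) := by
  intro p hp
  obtain ⟨K, hK, hξK⟩ := exists_pos_measure_preimage_nondegenerateSet (f := f) hgξ
  obtain ⟨γ, hγmax, hγβ⟩ := exists_between (max_lt hαβ hβ)
  have hγ : 1 < γ := (le_max_right α 1).trans_lt hγmax
  obtain ⟨R, hR⟩ := exists_rpow_le_abs_eulerStep hC hγ.le
    ((le_max_left α 1).trans_lt hγmax) hγβ hggrow hfbound T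
  have hfirst : Tendsto (fun N : ℕ => (N : ℝ) / K - K - T * K) atTop atTop := by
    simpa only [sub_eq_add_neg, add_assoc] using tendsto_atTop_add_const_right _ (-K + -(T * K))
      (tendsto_natCast_atTop_atTop.atTop_div_const hK)
  have hlower := ENNReal.Tendsto.const_mul (ENNReal.tendsto_ofReal_atTop.comp
    (tendsto_exp_pow_mul_pow_atTop hγ (inv_pos.2 (sqrt_pos.2 (by positivity : 0 < 2 * π * T))) hT))
    (Or.inr (measure_ne_top P (ξ ⁻¹' nondegenerateSet f g K)))
  rw [ENNReal.mul_top hξK.ne'] at hlower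
  refine tendsto_nhds_top_mono hlower ?_
  filter_upwards [eventually_ge_atTop 1, hfirst.eventually_ge_atTop (max R (exp 1))]
    with N hN hNlarge
  have hpath : ∀ ω ∈ ξ ⁻¹' nondegenerateSet f g K ∩ gridIncrementsGe W T N N,
      ENNReal.ofReal (exp (γ ^ (N - 1))) ≤ ENNReal.ofReal (|Y N N ω| ^ p) := by
    rintro ω ⟨hξω, hincr⟩
    have hY := exp_pow_le_abs_of_eulerRecursion (y := fun k => Y N k ω) hR hγ.le hK.le
      (by positivity) (div_le_self hT.le (Nat.one_le_cast.2 hN)) hN hNlarge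
      (fun k hk => hYrec N hN k hk ω) (fun k hk => Set.mem_iInter.1 hincr ⟨k, hk⟩)
      ((hY0 N hN ω).symm ▸ hξω)
    exact ENNReal.ofReal_le_ofReal
      (hY.trans (self_le_rpow_of_one_le ((one_le_exp (by positivity)).trans hY) hp))
  have hS := measurableSet_nondegenerateSet hf hg K
  calc _ = ENNReal.ofReal (exp (γ ^ (N - 1))) * (P (ξ ⁻¹' nondegenerateSet f g K) *
        ENNReal.ofReal ((√(2 * π * T))⁻¹ * exp (-((N : ℝ) + 1) ^ 2 / (2 * (T / N)))) ^ N) := by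
        rw [Function.comp_apply, ENNReal.ofReal_mul (exp_pos _).le,
          ENNReal.ofReal_pow (by positivity), mul_left_comm]
    _ ≤ ENNReal.ofReal (exp (γ ^ (N - 1))) *
        P (ξ ⁻¹' nondegenerateSet f g K ∩ gridIncrementsGe W T N N) := by
        gcongr
        exact hW.mul_ofReal_pow_le_measure_preimage_inter hT hindep hS hN (Nat.cast_nonneg N)
    _ ≤ _ := mul_measure_le_lintegral_of_forall_mem
        ((hξ hS).inter (hW.measurableSet_gridIncrementsGe hT.le N N)) hpath

theorem stmt_14 {Ω : Type*} [MeasurableSpace Ω] (P : Measure Ω) [IsProbabilityMeasure P]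
    (T : ℝ) (hT : 0 < T)
    (W : ℝ → Ω → ℝ) (hW : IsStandardBrownianMotion P T W)
    (ξ : Ω → ℝ) (hξ : Measurable ξ)
    (hindep : IndepFun ξ (fun ω => (fun t => W t ω : ℝ → ℝ)) P)
    (f g : ℝ → ℝ) (hf : Measurable f) (hg : Measurable g)
    (hgξ : 0 < P {ω | g (ξ ω) ≠ 0})
    (C α β : ℝ) (hC : 0 < C) (hβ : 1 < β) (hα0 : 0 ≤ α) (hαβ : α < β)
    (hggrow : ∀ x : ℝ, C ≤ |x| → |x| ^ β / C ≤ |g x|)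
    (hfbound : ∀ x : ℝ, C ≤ |x| → |f x| ≤ C * |x| ^ α)
    (Y : ℕ → ℕ → Ω → ℝ)
    (hY0 : ∀ N, 1 ≤ N → ∀ ω, Y N 0 ω = ξ ω)
    (hYrec : ∀ N, 1 ≤ N → ∀ k < N, ∀ ω,
      Y N (k + 1) ω = Y N k ω + (T / N) * f (Y N k ω)
        + g (Y N k ω) * (W (((k : ℝ) + 1) * T / N) ω - W ((k : ℝ) * T / N) ω)) :
    ∀ p : ℝ, 1 ≤ p →
      Tendsto (fun N : ℕ => ∫⁻ ω, ENNReal.ofReal (|Y N N ω| ^ p) ∂P) atTop (nhds ⊤) :=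
  stmt_14_general P T hT W hW ξ hξ hindep f g hf hg hgξ C α β hC hβ hαβ hggrow hfbound Y hY0 hYrec
end
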